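/- arXiv:1605.02584 — 5 statements merged into one kernel-verified Lean document; each statement's English description precedes it below -/
import Mathlib

section
/- Let c > 0, let L = 2/√(5c), and let Q_c(x) = (3c/2)·cosh^{-2}(√c·x/2). Then the functions w₁(x,y) = Q_c(x)^{3/2}·cos(y/L) and w₂(x,y) = Q_c(x)^{3/2}·sin(y/L) satisfy the linearized stationary equation −Δw + c·w − 2·Q_c(x)·w = 0 at every point (x,y) ∈ ℝ², where Δ = ∂_x² + ∂_y². (These are the extra elements of the kernel of the linearized operator 𝕃_c at the critical period L = 2/√(5c).) -/
/-!
Separation of variables: `f(x) φ(y)` lies in the kernel of `-Δ + c - 2Q` when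
`(-∂ₓ² + c - 2Q) f = -μ f` and `φ'' = -μ φ`. Since
`(sech^n (s x))'' = n² s² sech^n (s x) - n (n + 1) s² sech^(n+2) (s x)`, with `s = √c / 2` and
`n = 3` the sech⁵ terms of `Q^{3/2} ∝ sech³ (s x)` cancel against `2 Q Q^{3/2}`, leaving the
eigenvalue `-5c/4`; and `cos (y / L)`, `sin (y / L)` have `μ = L⁻²`, which is `5c/4` exactly at the
critical period.
-/

open Real

theorem hasDerivAt_inv_cosh_mul_pow (s : ℝ) (n : ℕ) (t : ℝ) :
    HasDerivAt (fun t => (cosh (s * t))⁻¹ ^ n)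
      (-(n * s * sinh (s * t) * (cosh (s * t))⁻¹ ^ (n + 1))) t := by
  have hcosh : HasDerivAt (fun t => cosh (s * t)) (sinh (s * t) * s) t := by
    simpa using ((hasDerivAt_id t).const_mul s).cosh
  refine ((hcosh.inv (cosh_pos _).ne').pow n).congr_deriv ?_
  rcases n with _ | n
  · simp
  · rw [Pi.inv_apply, div_eq_mul_inv, ← inv_pow]
    push_cast
    ring

theorem deriv_deriv_inv_cosh_mul_pow (s : ℝ) (n : ℕ) (t : ℝ) :
    deriv (deriv fun t => (cosh (s * t))⁻¹ ^ n) t =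
      n ^ 2 * s ^ 2 * (cosh (s * t))⁻¹ ^ n - n * (n + 1) * s ^ 2 * (cosh (s * t))⁻¹ ^ (n + 2) := by
  have hsinh : HasDerivAt (fun t => sinh (s * t)) (cosh (s * t) * s) t := by
    simpa using ((hasDerivAt_id t).const_mul s).sinh
  rw [funext fun t => (hasDerivAt_inv_cosh_mul_pow s n t).deriv]
  refine HasDerivAt.deriv ?_
  refine ((hsinh.const_mul (n * s)).mul (hasDerivAt_inv_cosh_mul_pow s (n + 1) t)).neg.congr_deriv ?_
  have hCV : cosh (s * t) * (cosh (s * t))⁻¹ = 1 := mul_inv_cancel₀ (cosh_pos _).ne'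
  set C := cosh (s * t)
  set V := C⁻¹
  push_cast
  linear_combination (n * s ^ 2 * V ^ n * (-1 + (n + 1) * (C * V + 1))) * hCV
    - (n * (n + 1) * s ^ 2 * V ^ (n + 2)) * cosh_sq (s * t)

theorem deriv_deriv_cos_div (L y : ℝ) :
    deriv (deriv fun y => cos (y / L)) y = -L⁻¹ ^ 2 * cos (y / L) := by
  have h : deriv (fun y => cos (y / L)) = fun y => -sin (y / L) * L⁻¹ := by
    funext y; simp
  simp [h, sq, mul_comm, mul_assoc]

theorem deriv_deriv_sin_div (L y : ℝ) :
    deriv (deriv fun y => sin (y / L)) y = -L⁻¹ ^ 2 * sin (y / L) := by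
  have h : deriv (fun y => sin (y / L)) = fun y => cos (y / L) * L⁻¹ := by
    funext y; simp
  simp [h, sq, mul_comm, mul_assoc]

theorem mul_sq_rpow_three_halves {a v : ℝ} (ha : 0 ≤ a) (hv : 0 ≤ v) :
    (a * v ^ 2) ^ (3 / 2 : ℝ) = a ^ (3 / 2 : ℝ) * v ^ 3 := by
  rw [Real.mul_rpow ha (by positivity), ← Real.rpow_natCast, ← Real.rpow_mul hv]
  norm_num

theorem linearized_eq_zero_of_separated {c μ : ℝ} {Q f φ : ℝ → ℝ} {w : ℝ → ℝ → ℝ}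
    (hw : ∀ x y, w x y = f x * φ y)
    (hf : ∀ x, -deriv (deriv f) x + c * f x - 2 * Q x * f x = -μ * f x)
    (hφ : ∀ y, deriv (deriv φ) y = -μ * φ y) (x y : ℝ) :
    -(deriv (deriv (fun x' => w x' y)) x + deriv (deriv (fun y' => w x y')) y)
      + c * w x y - 2 * Q x * w x y = 0 := by
  have hx : (fun x' => w x' y) = fun x' => f x' * φ y := funext fun x' => hw x' y
  have hy : (fun y' => w x y') = fun y' => f x * φ y' := funext fun y' => hw x y'
  rw [hx, hy, deriv_mul_const_field', deriv_mul_const_field, deriv_const_mul_field',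
    deriv_const_mul_field, hw]
  linear_combination φ y * hf x - f x * hφ y

theorem linearized_soliton_rpow_three_halves {c : ℝ} (hc : 0 < c) {Q : ℝ → ℝ}
    (hQ : ∀ x, Q x = (3 * c / 2) * (cosh (√c * x / 2))⁻¹ ^ 2) (x : ℝ) :
    -deriv (deriv fun x => Q x ^ (3 / 2 : ℝ)) x + c * Q x ^ (3 / 2 : ℝ)
      - 2 * Q x * Q x ^ (3 / 2 : ℝ) = -(5 * c / 4) * Q x ^ (3 / 2 : ℝ) := by
  have hQ' : ∀ x, Q x = (3 * c / 2) * (cosh (√c / 2 * x))⁻¹ ^ 2 := fun x => by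
    rw [hQ]; ring_nf
  have hprofile : ∀ x, Q x ^ (3 / 2 : ℝ)
      = (3 * c / 2) ^ (3 / 2 : ℝ) * (cosh (√c / 2 * x))⁻¹ ^ 3 := fun x => by
    rw [hQ', mul_sq_rpow_three_halves (by positivity) (inv_pos.2 (cosh_pos _)).le]
  have hs : (√c / 2) ^ 2 = c / 4 := by rw [div_pow, sq_sqrt hc.le]; ring
  rw [funext hprofile, deriv_const_mul_field', deriv_const_mul_field,
    deriv_deriv_inv_cosh_mul_pow, hprofile, hQ', hs]
  push_cast
  ring

theorem kernel_elements_at_critical_period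
    (c : ℝ) (hc : 0 < c) (L : ℝ) (hL : L = 2 / Real.sqrt (5 * c))
    (Q : ℝ → ℝ)
    (hQ : ∀ x, Q x = (3 * c / 2) * (Real.cosh (Real.sqrt c * x / 2))⁻¹ ^ 2)
    (w₁ w₂ : ℝ → ℝ → ℝ)
    (hw₁ : ∀ x y, w₁ x y = (Q x) ^ ((3 : ℝ) / 2) * Real.cos (y / L))
    (hw₂ : ∀ x y, w₂ x y = (Q x) ^ ((3 : ℝ) / 2) * Real.sin (y / L)) :
    ∀ x y : ℝ,
      (-(deriv (deriv (fun x' => w₁ x' y)) x + deriv (deriv (fun y' => w₁ x y')) y)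
          + c * w₁ x y - 2 * Q x * w₁ x y = 0) ∧
      (-(deriv (deriv (fun x' => w₂ x' y)) x + deriv (deriv (fun y' => w₂ x y')) y)
          + c * w₂ x y - 2 * Q x * w₂ x y = 0) := by
  have hfreq : L⁻¹ ^ 2 = 5 * c / 4 := by
    rw [hL, inv_div, div_pow, sq_sqrt (by positivity)]
    norm_num
  have hprofile := linearized_soliton_rpow_three_halves hc hQ
  intro x y
  constructor
  · refine linearized_eq_zero_of_separated hw₁ hprofile (fun y => ?_) x y
    rw [deriv_deriv_cos_div, hfreq]
  · refine linearized_eq_zero_of_separated hw₂ hprofile (fun y => ?_) x y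
    rw [deriv_deriv_sin_div, hfreq]
end

section
/- Let c > 0, Q_c(x) = (3c/2)·cosh^{-2}(√c·x/2), φ_c(x) = √c·tanh(√c·x/2), and let ℒ_c u = −u'' + c·u − 2·Q_c·u. Then for every x ∈ ℝ: ((ℒ_c + 5c/4)(∂_x(Q_c^{3/2})))(x) · φ_c(x) = −2c·Q_c(x)^{5/2} + (4/3)·Q_c(x)^{7/2}. -/
/-!
Write `φ = √c · tanh (√c x / 2)`. Since `cosh⁻² = 1 - tanh²`, the soliton is
`Q = (3/2) (c - φ²)`, and `tanh' = 1 - tanh²` gives the Riccati equation `φ' = (c - φ²) / 2`.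
Hence `Q' = -φ Q`, so `P = Q ^ (3/2)` satisfies `P' = -(3/2) φ P`, and every derivative of `P`
is `P` times a polynomial in `φ`. Both sides of the identity then become `-2 φ² Q P`.
-/

open Real

namespace Real

theorem inv_cosh_sq (x : ℝ) : (cosh x)⁻¹ ^ 2 = 1 - tanh x ^ 2 := by
  rw [tanh_eq_sinh_div_cosh]
  field_simp
  linarith [cosh_sq_sub_sinh_sq x]

theorem hasDerivAt_tanh (x : ℝ) : HasDerivAt tanh (1 - tanh x ^ 2) x := by
  rw [← inv_cosh_sq, funext tanh_eq_sinh_div_cosh]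
  refine ((hasDerivAt_sinh x).div (hasDerivAt_cosh x) (cosh_pos x).ne').congr_deriv ?_
  field_simp
  linarith [cosh_sq_sub_sinh_sq x]

end Real

theorem hasDerivAt_sqrt_mul_tanh {c : ℝ} (hc : 0 ≤ c) (x : ℝ) :
    HasDerivAt (fun y => √c * tanh (√c * y / 2)) ((c - (√c * tanh (√c * x / 2)) ^ 2) / 2) x := by
  have hlin : HasDerivAt (fun y => √c * y / 2) (√c / 2) x := by
    simpa using ((hasDerivAt_id x).const_mul √c).div_const 2
  refine (((hasDerivAt_tanh _).comp x hlin).const_mul √c).congr_deriv ?_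
  linear_combination (1 / 2) * sq_sqrt hc

theorem hasDerivAt_rpow_of_hasDerivAt_neg_mul {Q φ : ℝ → ℝ} {x : ℝ}
    (hQ : HasDerivAt Q (-φ x * Q x) x) (hpos : 0 < Q x) (p : ℝ) :
    HasDerivAt (fun y => Q y ^ p) (-p * φ x * Q x ^ p) x := by
  refine (hQ.rpow_const (Or.inl hpos.ne')).congr_deriv ?_
  rw [rpow_sub_one hpos.ne']
  field_simp

section Riccati

variable {c : ℝ} {φ P : ℝ → ℝ}

theorem hasDerivAt_three_halves_mul_sub_sq {x : ℝ} (hφ : HasDerivAt φ ((c - φ x ^ 2) / 2) x) :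
    HasDerivAt (fun y => 3 / 2 * (c - φ y ^ 2)) (-φ x * (3 / 2 * (c - φ x ^ 2))) x := by
  refine (((hφ.fun_pow 2).const_sub c).const_mul (3 / 2)).congr_deriv ?_
  ring

theorem hasDerivAt_deriv_of_riccati (hφ : ∀ x, HasDerivAt φ ((c - φ x ^ 2) / 2) x)
    (hP : ∀ x, HasDerivAt P (-(3 / 2) * φ x * P x) x) (x : ℝ) :
    HasDerivAt (deriv P) (P x * (3 * φ x ^ 2 - 3 * c / 4)) x := by
  rw [funext fun y => (hP y).deriv]
  refine (((hφ x).const_mul (-(3 / 2))).mul (hP x)).congr_deriv ?_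
  ring

theorem hasDerivAt_deriv_deriv_of_riccati (hφ : ∀ x, HasDerivAt φ ((c - φ x ^ 2) / 2) x)
    (hP : ∀ x, HasDerivAt P (-(3 / 2) * φ x * P x) x) (x : ℝ) :
    HasDerivAt (deriv (deriv P)) (φ x * P x * (33 * c / 8 - 15 / 2 * φ x ^ 2)) x := by
  rw [funext fun y => (hasDerivAt_deriv_of_riccati hφ hP y).deriv]
  refine ((hP x).mul ((((hφ x).fun_pow 2).const_mul 3).sub_const (3 * c / 4))).congr_deriv ?_
  ring

theorem linearized_deriv_mul_eq_of_riccati (hφ : ∀ x, HasDerivAt φ ((c - φ x ^ 2) / 2) x)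
    (hP : ∀ x, HasDerivAt P (-(3 / 2) * φ x * P x) x) (x : ℝ) :
    (-(deriv (deriv (deriv P)) x) + c * deriv P x - 2 * (3 / 2 * (c - φ x ^ 2)) * deriv P x
        + (5 * c / 4) * deriv P x) * φ x
      = -2 * φ x ^ 2 * (3 / 2 * (c - φ x ^ 2)) * P x := by
  rw [(hasDerivAt_deriv_deriv_of_riccati hφ hP x).deriv, (hP x).deriv]
  ring

end Riccati

theorem linearized_operator_on_deriv_pow_three_halves
    (c : ℝ) (hc : 0 < c) (Q P φ : ℝ → ℝ)
    (hQ : ∀ x, Q x = (3 * c / 2) * (Real.cosh (Real.sqrt c * x / 2))⁻¹ ^ 2)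
    (hP : ∀ x, P x = (Q x) ^ ((3 : ℝ) / 2))
    (hφ : ∀ x, φ x = Real.sqrt c * Real.tanh (Real.sqrt c * x / 2)) :
    ∀ x : ℝ,
      (-(deriv (deriv (deriv P)) x) + c * deriv P x - 2 * Q x * deriv P x
          + (5 * c / 4) * deriv P x) * φ x
        = -(2 * c) * (Q x) ^ ((5 : ℝ) / 2) + (4 / 3) * (Q x) ^ ((7 : ℝ) / 2) := by
  have hQpos : ∀ x, 0 < Q x := fun x => by rw [hQ]; positivity
  have hQφ : ∀ x, Q x = 3 / 2 * (c - φ x ^ 2) := fun x => by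
    rw [hQ, hφ, inv_cosh_sq, mul_pow, sq_sqrt hc.le]
    ring
  have hφ' : ∀ x, HasDerivAt φ ((c - φ x ^ 2) / 2) x := by
    rw [funext hφ]
    exact hasDerivAt_sqrt_mul_tanh hc.le
  have hP' : ∀ x, HasDerivAt P (-(3 / 2) * φ x * P x) x := fun x => by
    have hQ' := hasDerivAt_three_halves_mul_sub_sq (hφ' x)
    rw [← funext hQφ, ← hQφ] at hQ'
    simpa only [← hP] using hasDerivAt_rpow_of_hasDerivAt_neg_mul hQ' (hQpos x) (3 / 2)
  intro x
  have hQne := (hQpos x).ne'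
  rw [show (5 : ℝ) / 2 = 3 / 2 + 1 by norm_num, show (7 : ℝ) / 2 = 3 / 2 + 1 + 1 by norm_num,
    rpow_add_one hQne, rpow_add_one hQne, rpow_add_one hQne, ← hP, hQφ,
    linearized_deriv_mul_eq_of_riccati hφ' hP']
  ring
end

section
/- Let c > 0, Q_c(x) = (3c/2)·cosh^{-2}(√c·x/2), φ_c(x) = √c·tanh(√c·x/2), and let ℒ_c u = −u'' + c·u − 2·Q_c·u. Then for every x ∈ ℝ: ∂_x((ℒ_c + 5c/4)(Q_c^{3/2}·φ_c))(x) = −(10c/3)·Q_c(x)^{5/2} + (8/3)·Q_c(x)^{7/2}. -/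
/-!
With `Q = soliton c` and `φ = solitonWeight c` one has `Q' = -φ Q`, `φ' = Q / 3` and
`φ² = c - 2Q/3`, so differentiation maps `Q^p φ` to a combination of `Q^p` and `Q^(p+1)`, and
`Q^p` to a multiple of `Q^p φ`. Applying this twice gives
`(ℒ_c + (p² - 1) c) (Q^p φ) = ((1 + 2p)(p + 1)/3 - 2) Q^(p+1) φ`; for `p = 3/2` the shift is
`5c/4` and the right-hand side is `(4/3) Q^(5/2) φ`, whose derivative is read off once more.
-/

open Real

noncomputable def soliton (c x : ℝ) : ℝ := 3 * c / 2 * (cosh (√c * x / 2))⁻¹ ^ 2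

noncomputable def solitonWeight (c x : ℝ) : ℝ := √c * tanh (√c * x / 2)

lemma hasDerivAt_mul_div_two (a x : ℝ) : HasDerivAt (fun y => a * y / 2) (a / 2) x := by
  simpa using ((hasDerivAt_id x).const_mul a).div_const 2

lemma soliton_pos {c : ℝ} (hc : 0 < c) (x : ℝ) : 0 < soliton c x := by
  have := cosh_pos (√c * x / 2)
  unfold soliton
  positivity

lemma solitonWeight_sq {c : ℝ} (hc : 0 ≤ c) (x : ℝ) :
    solitonWeight c x ^ 2 = c - 2 / 3 * soliton c x := by
  have hcosh := (cosh_pos (√c * x / 2)).ne'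
  rw [solitonWeight, soliton, tanh_eq_sinh_div_cosh, mul_pow, div_pow, sinh_sq, sq_sqrt hc]
  field_simp

lemma hasDerivAt_soliton (c x : ℝ) :
    HasDerivAt (soliton c) (-(solitonWeight c x * soliton c x)) x := by
  have hcosh := (cosh_pos (√c * x / 2)).ne'
  have h := ((((hasDerivAt_mul_div_two √c x).cosh).inv hcosh).pow 2).const_mul (3 * c / 2)
  refine h.congr_deriv ?_
  simp only [solitonWeight, soliton, tanh_eq_sinh_div_cosh, Pi.inv_apply, Nat.add_one_sub_one, pow_one]
  field_simp
  ring

lemma hasDerivAt_solitonWeight {c : ℝ} (hc : 0 ≤ c) (x : ℝ) :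
    HasDerivAt (solitonWeight c) (soliton c x / 3) x := by
  have hcosh := (cosh_pos (√c * x / 2)).ne'
  have h := (((hasDerivAt_mul_div_two √c x).sinh).div ((hasDerivAt_mul_div_two √c x).cosh)
    hcosh).const_mul √c
  have hfun : solitonWeight c = fun y => √c * (sinh (√c * y / 2) / cosh (√c * y / 2)) := by
    funext y; rw [solitonWeight, tanh_eq_sinh_div_cosh]
  rw [hfun]
  refine h.congr_deriv ?_
  simp only [soliton]
  field_simp
  rw [cosh_sq_sub_sinh_sq, sq_sqrt hc, mul_one]

lemma hasDerivAt_soliton_rpow {c : ℝ} (hc : 0 < c) (p x : ℝ) :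
    HasDerivAt (fun y => soliton c y ^ p) (-(p * solitonWeight c x * soliton c x ^ p)) x := by
  have hQ := soliton_pos hc x
  refine ((hasDerivAt_soliton c x).rpow_const (Or.inl hQ.ne')).congr_deriv ?_
  rw [rpow_sub_one hQ.ne']
  field_simp

lemma hasDerivAt_soliton_rpow_mul_solitonWeight {c : ℝ} (hc : 0 < c) (p x : ℝ) :
    HasDerivAt (fun y => soliton c y ^ p * solitonWeight c y)
      ((1 + 2 * p) / 3 * soliton c x ^ (p + 1) - p * c * soliton c x ^ p) x := by
  refine ((hasDerivAt_soliton_rpow hc p x).mul (hasDerivAt_solitonWeight hc.le x)).congr_deriv ?_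
  rw [rpow_add_one (soliton_pos hc x).ne']
  linear_combination -(p * soliton c x ^ p) * solitonWeight_sq hc.le x

lemma deriv_deriv_soliton_rpow_mul_solitonWeight {c : ℝ} (hc : 0 < c) (p x : ℝ) :
    deriv (deriv fun y => soliton c y ^ p * solitonWeight c y) x =
      p ^ 2 * c * soliton c x ^ p * solitonWeight c x
        - (1 + 2 * p) * (p + 1) / 3 * soliton c x ^ (p + 1) * solitonWeight c x := by
  have hderiv : deriv (fun y => soliton c y ^ p * solitonWeight c y) = fun y =>
      (1 + 2 * p) / 3 * soliton c y ^ (p + 1) - p * c * soliton c y ^ p :=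
    funext fun y => (hasDerivAt_soliton_rpow_mul_solitonWeight hc p y).deriv
  rw [hderiv]
  refine ((((hasDerivAt_soliton_rpow hc (p + 1) x).const_mul _).sub
    ((hasDerivAt_soliton_rpow hc p x).const_mul _)).deriv).trans ?_
  ring

noncomputable def linearizedOperator (c : ℝ) (u : ℝ → ℝ) (x : ℝ) : ℝ :=
  -deriv (deriv u) x + c * u x - 2 * soliton c x * u x

lemma linearizedOperator_soliton_rpow_mul_solitonWeight {c : ℝ} (hc : 0 < c) (p x : ℝ) :
    linearizedOperator c (fun y => soliton c y ^ p * solitonWeight c y) x =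
      (1 - p ^ 2) * c * soliton c x ^ p * solitonWeight c x
        + ((1 + 2 * p) * (p + 1) / 3 - 2) * soliton c x ^ (p + 1) * solitonWeight c x := by
  rw [linearizedOperator, deriv_deriv_soliton_rpow_mul_solitonWeight hc,
    rpow_add_one (soliton_pos hc x).ne']
  ring

theorem deriv_of_linearized_operator_on_pow_three_halves_mul_weight
    (c : ℝ) (hc : 0 < c) (Q P φ g : ℝ → ℝ)
    (hQ : ∀ x, Q x = (3 * c / 2) * (Real.cosh (Real.sqrt c * x / 2))⁻¹ ^ 2)
    (hP : ∀ x, P x = (Q x) ^ ((3 : ℝ) / 2))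
    (hφ : ∀ x, φ x = Real.sqrt c * Real.tanh (Real.sqrt c * x / 2))
    (hg : ∀ x, g x = -(deriv (deriv (fun y => P y * φ y)) x)
        + c * (P x * φ x) - 2 * Q x * (P x * φ x) + (5 * c / 4) * (P x * φ x)) :
    ∀ x : ℝ,
      deriv g x = -(10 * c / 3) * (Q x) ^ ((5 : ℝ) / 2)
        + (8 / 3) * (Q x) ^ ((7 : ℝ) / 2) := by
  obtain rfl : Q = soliton c := funext hQ
  obtain rfl : φ = solitonWeight c := funext hφ
  obtain rfl : P = fun y => soliton c y ^ ((3 : ℝ) / 2) := funext hP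
  have hg_closed : g = fun y => 4 / 3 * (soliton c y ^ ((5 : ℝ) / 2) * solitonWeight c y) := by
    funext y
    have hL := linearizedOperator_soliton_rpow_mul_solitonWeight hc ((3 : ℝ) / 2) y
    rw [linearizedOperator] at hL
    rw [hg, hL]
    norm_num
    ring
  intro x
  rw [hg_closed, ((hasDerivAt_soliton_rpow_mul_solitonWeight hc _ x).const_mul _).deriv]
  norm_num
  ring
end

section
/- Let c > 0 and Q_c(x) = (3c/2)·cosh^{-2}(√c·x/2). Then ∫_ℝ Q_c(x)^{5/2} dx = √(9/10)·(∫_ℝ Q_c(x)^{7/2} dx)^{1/2}·(∫_ℝ Q_c(x)^{3/2} dx)^{1/2}. -/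
/-!
Write `Q_c x = K sech² (a x)` with `K = 3c/2`, `a = √c/2`, so that
`Q_c ^ (m/2) = K^(m/2) sech^m (a x)`. Differentiating `sinh · sech^(m+1)` and integrating over `ℝ`
gives the reduction formula
`(m + 1) ∫ sech^(m+2) = m ∫ sech^m`, hence `∫ Q_c^(5/2) = (9c/8) ∫ Q_c^(3/2)` and
`∫ Q_c^(7/2) = (5c/4) ∫ Q_c^(5/2)`. Therefore
`∫ Q_c^(7/2) · ∫ Q_c^(3/2) = (10/9) (∫ Q_c^(5/2))²`.
-/

open MeasureTheory Real

lemma integrable_exp_neg_abs : Integrable fun x : ℝ => exp (-|x|) := by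
  have hIic : IntegrableOn (fun x : ℝ => exp (-|x|)) (Set.Iic 0) :=
    (integrableOn_exp_Iic 0).congr_fun
      (fun x hx => by simp [abs_of_nonpos (Set.mem_Iic.mp hx)]) measurableSet_Iic
  have hIoi : IntegrableOn (fun x : ℝ => exp (-|x|)) (Set.Ioi 0) :=
    (exp_neg_integrableOn_Ioi 0 one_pos).congr_fun
      (fun x hx => by simp [abs_of_pos (Set.mem_Ioi.mp hx)]) measurableSet_Ioi
  simpa [Set.Iic_union_Ioi] using hIic.union hIoi

lemma inv_cosh_le_two_mul_exp_neg_abs (x : ℝ) : (cosh x)⁻¹ ≤ 2 * exp (-|x|) := by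
  have h : exp |x| / 2 ≤ cosh x := by
    rw [← cosh_abs, cosh_eq]
    linarith [exp_pos (-|x|)]
  calc (cosh x)⁻¹ ≤ (exp |x| / 2)⁻¹ := inv_anti₀ (by positivity) h
    _ = 2 * exp (-|x|) := by rw [exp_neg, inv_div, div_eq_mul_inv]

lemma integrable_inv_cosh_pow {n : ℕ} (hn : n ≠ 0) :
    Integrable fun x : ℝ => (cosh x)⁻¹ ^ n := by
  refine (integrable_exp_neg_abs.const_mul 2).mono'
    ((continuous_cosh.inv₀ fun x => (cosh_pos x).ne').pow n).aestronglyMeasurable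
    (Filter.Eventually.of_forall fun x => ?_)
  have hpos : 0 < (cosh x)⁻¹ := inv_pos.mpr (cosh_pos x)
  rw [norm_of_nonneg (by positivity)]
  exact (pow_le_of_le_one hpos.le (inv_le_one_of_one_le₀ (one_le_cosh x)) hn).trans
    (inv_cosh_le_two_mul_exp_neg_abs x)

lemma abs_sinh_le_cosh (x : ℝ) : |sinh x| ≤ cosh x := by
  rw [abs_sinh, ← cosh_abs]
  exact (sinh_lt_cosh _).le

lemma hasDerivAt_sinh_mul_inv_cosh_pow (n : ℕ) (x : ℝ) :
    HasDerivAt (fun x => sinh x * (cosh x)⁻¹ ^ (n + 1))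
      ((n + 1) * (cosh x)⁻¹ ^ (n + 2) - n * (cosh x)⁻¹ ^ n) x := by
  have hc : cosh x ≠ 0 := (cosh_pos x).ne'
  refine ((hasDerivAt_sinh x).mul (((hasDerivAt_cosh x).inv hc).pow (n + 1))).congr_deriv ?_
  have hsq : sinh x ^ 2 = cosh x ^ 2 - 1 := by linarith [cosh_sq x]
  have hct : cosh x * (cosh x)⁻¹ = 1 := mul_inv_cancel₀ hc
  simp only [Pi.inv_apply, Pi.pow_apply, Nat.add_sub_cancel, div_eq_mul_inv, ← inv_pow]
  push_cast
  linear_combination (-(n + 1) * (cosh x)⁻¹ ^ (n + 2)) * hsq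
    + (-(n + 1) * (cosh x)⁻¹ ^ n * (cosh x * (cosh x)⁻¹ + 1) + (cosh x)⁻¹ ^ n) * hct

lemma integral_inv_cosh_pow_add_two {n : ℕ} (hn : n ≠ 0) :
    (n + 1) * ∫ x : ℝ, (cosh x)⁻¹ ^ (n + 2) = n * ∫ x : ℝ, (cosh x)⁻¹ ^ n := by
  have hIn := integrable_inv_cosh_pow hn
  have hIn2 := integrable_inv_cosh_pow (n := n + 2) (by omega)
  have hF : Integrable fun x => sinh x * (cosh x)⁻¹ ^ (n + 1) := by
    refine hIn.mono' ((continuous_sinh.mul ((continuous_cosh.inv₀ fun x => (cosh_pos x).ne').pow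
      _)).aestronglyMeasurable) (Filter.Eventually.of_forall fun x => ?_)
    have hc := cosh_pos x
    calc ‖sinh x * (cosh x)⁻¹ ^ (n + 1)‖ = |sinh x| * (cosh x)⁻¹ ^ (n + 1) := by
          rw [norm_eq_abs, abs_mul,
            abs_of_nonneg (by positivity : (0 : ℝ) ≤ (cosh x)⁻¹ ^ (n + 1))]
      _ ≤ cosh x * (cosh x)⁻¹ ^ (n + 1) := by gcongr; exact abs_sinh_le_cosh x
      _ = (cosh x)⁻¹ ^ n := by rw [pow_succ', ← mul_assoc, mul_inv_cancel₀ hc.ne', one_mul]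
  have h := integral_eq_zero_of_hasDerivAt_of_integrable (hasDerivAt_sinh_mul_inv_cosh_pow n)
    ((hIn2.const_mul _).sub (hIn.const_mul _)) hF
  rw [integral_sub (hIn2.const_mul _) (hIn.const_mul _), integral_const_mul,
    integral_const_mul] at h
  linarith

lemma mul_sq_rpow_natCast_div_two {K t : ℝ} (hK : 0 ≤ K) (ht : 0 ≤ t) (m : ℕ) :
    (K * t ^ 2) ^ ((m : ℝ) / 2) = K ^ ((m : ℝ) / 2) * t ^ m := by
  rw [mul_rpow hK (by positivity), ← rpow_natCast t 2, ← rpow_mul ht, Nat.cast_ofNat,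
    mul_div_cancel₀ _ two_ne_zero, rpow_natCast]

lemma integral_mul_inv_cosh_sq_rpow {K : ℝ} (hK : 0 ≤ K) (a : ℝ) (m : ℕ) :
    ∫ x : ℝ, (K * (cosh (a * x))⁻¹ ^ 2) ^ ((m : ℝ) / 2)
      = K ^ ((m : ℝ) / 2) * (|a⁻¹| * ∫ x : ℝ, (cosh x)⁻¹ ^ m) := by
  simp_rw [mul_sq_rpow_natCast_div_two hK (inv_pos.mpr (cosh_pos _)).le, integral_const_mul]
  rw [Measure.integral_comp_mul_left (fun x => (cosh x)⁻¹ ^ m), smul_eq_mul]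

lemma integral_mul_inv_cosh_sq_rpow_add_two {K : ℝ} (hK : 0 ≤ K) (a : ℝ) {m : ℕ}
    (hm : m ≠ 0) :
    ∫ x : ℝ, (K * (cosh (a * x))⁻¹ ^ 2) ^ (((m : ℝ) + 2) / 2)
      = K * (m / (m + 1)) * ∫ x : ℝ, (K * (cosh (a * x))⁻¹ ^ 2) ^ ((m : ℝ) / 2) := by
  have hrec :
      ∫ x : ℝ, (cosh x)⁻¹ ^ (m + 2) = m / (m + 1) * ∫ x : ℝ, (cosh x)⁻¹ ^ m := by
    rw [div_mul_eq_mul_div, eq_div_iff (by positivity), ← integral_inv_cosh_pow_add_two hm,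
      mul_comm]
  have hexp : ((m : ℝ) + 2) / 2 = ((m + 2 : ℕ) : ℝ) / 2 := by push_cast; ring
  rw [hexp, integral_mul_inv_cosh_sq_rpow hK, integral_mul_inv_cosh_sq_rpow hK,
    show ((m + 2 : ℕ) : ℝ) / 2 = (m : ℝ) / 2 + 1 by push_cast; ring,
    rpow_add' hK (by positivity), rpow_one, hrec]
  ring

theorem soliton_five_halves_integral_identity
    (c : ℝ) (hc : 0 < c) (Q : ℝ → ℝ)
    (hQ : ∀ x, Q x = (3 * c / 2) * (Real.cosh (Real.sqrt c * x / 2))⁻¹ ^ 2) :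
    ∫ x : ℝ, (Q x) ^ ((5 : ℝ) / 2)
      = Real.sqrt (9 / 10) * (∫ x : ℝ, (Q x) ^ ((7 : ℝ) / 2)) ^ ((1 : ℝ) / 2)
          * (∫ x : ℝ, (Q x) ^ ((3 : ℝ) / 2)) ^ ((1 : ℝ) / 2) := by
  have hK : 0 ≤ 3 * c / 2 := by positivity
  have hQ' : Q = fun x => 3 * c / 2 * (cosh (√c / 2 * x))⁻¹ ^ 2 := by
    funext x; rw [hQ, mul_div_right_comm (√c)]
  have h5 : ∫ x, Q x ^ ((5 : ℝ) / 2) = 9 * c / 8 * ∫ x, Q x ^ ((3 : ℝ) / 2) := by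
    convert integral_mul_inv_cosh_sq_rpow_add_two hK (√c / 2) (m := 3) three_ne_zero using 2
      <;> norm_num [hQ']
    ring
  have h7 : ∫ x, Q x ^ ((7 : ℝ) / 2) = 5 * c / 4 * ∫ x, Q x ^ ((5 : ℝ) / 2) := by
    convert integral_mul_inv_cosh_sq_rpow_add_two hK (√c / 2) (m := 5) (by norm_num) using 2
      <;> norm_num [hQ']
    ring
  set I₃ := ∫ x, Q x ^ ((3 : ℝ) / 2)
  have hI₃ : 0 ≤ I₃ := integral_nonneg fun x => rpow_nonneg (by rw [hQ]; positivity) _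
  rw [h7, h5, ← sqrt_eq_rpow, ← sqrt_eq_rpow, ← sqrt_mul (by norm_num),
    ← sqrt_mul (by positivity),
    show 9 / 10 * (5 * c / 4 * (9 * c / 8 * I₃)) * I₃ = (9 * c / 8 * I₃) ^ 2 by ring,
    sqrt_sq (by positivity)]
end

section
/- Let c > 0, Q_c(x) = (3c/2)·cosh^{-2}(√c·x/2), and ℒ_c u = −u'' + c·u − 2·Q_c·u. Then for every smooth compactly supported function v : ℝ → ℝ, setting w = v·Q_c^{3/2}, one has (1/2)·∫_ℝ (v'(x))²·Q_c(x)³ dx = (1/2)·∫_ℝ w(x)·((ℒ_c + 5c/4)w)(x) dx. -/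
open MeasureTheory Filter Topology

private lemma hcs_of_vanish2 {f g h : ℝ → ℝ} (hf : HasCompactSupport f)
    (hg : HasCompactSupport g) (hvan : ∀ x, f x = 0 → g x = 0 → h x = 0) :
    HasCompactSupport h := by
  refine IsCompact.of_isClosed_subset (hf.union hg) (isClosed_tsupport h) ?_
  have h1 : Function.support h ⊆ Function.support f ∪ Function.support g := by
    intro x hx
    by_contra hcon
    simp only [Set.mem_union, Function.mem_support, not_or, not_not] at hcon
    exact hx (hvan x hcon.1 hcon.2)
  calc tsupport h ⊆ closure (Function.support f ∪ Function.support g) := closure_mono h1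
    _ = tsupport f ∪ tsupport g := closure_union

private lemma hasDerivAt_linarg (a : ℝ) (x : ℝ) :
    HasDerivAt (fun y : ℝ => a * y / 2) (a / 2) x := by
  simpa using ((hasDerivAt_id x).const_mul a).div_const 2

private lemma hasDerivAt_L1 (a K : ℝ) (x : ℝ) :
    HasDerivAt (fun y : ℝ => K * (Real.cosh (a * y / 2))⁻¹ ^ 3)
      (K * (-(3 * (a / 2)) * (Real.sinh (a * x / 2) * (Real.cosh (a * x / 2))⁻¹ ^ 4))) x := by
  have h0 : Real.cosh (a * x / 2) ≠ 0 := (Real.cosh_pos _).ne'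
  have h := ((((hasDerivAt_linarg a x).cosh).inv h0).pow 3).const_mul K
  refine h.congr_deriv ?_
  norm_num only [Pi.inv_apply, Pi.pow_apply]
  field_simp

private lemma hasDerivAt_L2 (a K : ℝ) (x : ℝ) :
    HasDerivAt (fun y : ℝ => K * (Real.sinh (a * y / 2) * (Real.cosh (a * y / 2))⁻¹ ^ 4))
      (K * ((a / 2) * ((Real.cosh (a * x / 2))⁻¹ ^ 3
          - 4 * Real.sinh (a * x / 2) ^ 2 * (Real.cosh (a * x / 2))⁻¹ ^ 5))) x := by
  have h0 : Real.cosh (a * x / 2) ≠ 0 := (Real.cosh_pos _).ne'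
  have h := (((hasDerivAt_linarg a x).sinh).mul
    ((((hasDerivAt_linarg a x).cosh).inv h0).pow 4)).const_mul K
  refine h.congr_deriv ?_
  norm_num only [Pi.inv_apply, Pi.pow_apply]
  field_simp
  ring

private lemma hasDerivAt_L3 (a K : ℝ) (x : ℝ) :
    HasDerivAt (fun y : ℝ => K * (Real.sinh (a * y / 2) * (Real.cosh (a * y / 2))⁻¹ ^ 7))
      (K * ((a / 2) * ((Real.cosh (a * x / 2))⁻¹ ^ 6
          - 7 * Real.sinh (a * x / 2) ^ 2 * (Real.cosh (a * x / 2))⁻¹ ^ 8))) x := by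
  have h0 : Real.cosh (a * x / 2) ≠ 0 := (Real.cosh_pos _).ne'
  have h := (((hasDerivAt_linarg a x).sinh).mul
    ((((hasDerivAt_linarg a x).cosh).inv h0).pow 7)).const_mul K
  refine h.congr_deriv ?_
  norm_num only [Pi.inv_apply, Pi.pow_apply]
  field_simp
  ring

private lemma main_aux (c : ℝ) (Q R R1 R2 P P1 : ℝ → ℝ) (v : ℝ → ℝ)
    (hv : ContDiff ℝ (⊤ : ℕ∞) v) (hvs : HasCompactSupport v)
    (hQc : Continuous Q) (hR2c : Continuous R2) (hP1c : Continuous P1)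
    (hR : ∀ x, HasDerivAt R (R1 x) x) (hR1 : ∀ x, HasDerivAt R1 (R2 x) x)
    (hP : ∀ x, HasDerivAt P (P1 x) x)
    (hkey : ∀ x vx v1x : ℝ,
      (9 * c / 4) * (vx * R x) ^ 2 - 2 * Q x * (vx * R x) ^ 2
        + (v1x * R x + vx * R1 x) ^ 2 - v1x ^ 2 * (Q x) ^ 3
        - 3 * vx * v1x * P x - (3 / 2) * vx ^ 2 * P1 x = 0) :
    (1 / 2) * ∫ x : ℝ, (deriv v x) ^ 2 * (Q x) ^ 3
      = (1 / 2) * ∫ x : ℝ, (v x * R x) *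
          (-(deriv (deriv (fun y => v y * R y)) x) + c * (v x * R x)
            - 2 * Q x * (v x * R x) + (5 * c / 4) * (v x * R x)) := by
  have hv' : ContDiff ℝ ((⊤ : ℕ∞) : WithTop ℕ∞) v := hv.of_le (by simp)
  have hvd : Differentiable ℝ v := hv'.differentiable (by norm_num)
  have hv1 : ContDiff ℝ ((⊤ : ℕ∞) : WithTop ℕ∞) (deriv v) := (contDiff_infty_iff_deriv.mp hv').2
  have hv1d : Differentiable ℝ (deriv v) := hv1.differentiable (by norm_num)
  have hv2c : Continuous (deriv (deriv v)) := ((contDiff_infty_iff_deriv.mp hv1).2).continuous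
  have hvc : Continuous v := hv.continuous
  have hv1c : Continuous (deriv v) := hv1.continuous
  have hvs1 : HasCompactSupport (deriv v) := hvs.deriv
  have hRd : Differentiable ℝ R := fun x => (hR x).differentiableAt
  have hR1d : Differentiable ℝ R1 := fun x => (hR1 x).differentiableAt
  have hPd : Differentiable ℝ P := fun x => (hP x).differentiableAt
  have hRc : Continuous R := hRd.continuous
  have hR1c : Continuous R1 := hR1d.continuous
  have hPc : Continuous P := hPd.continuous
  -- derivatives of w
  have hw : ∀ x, HasDerivAt (fun y => v y * R y) (deriv v x * R x + v x * R1 x) x :=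
    fun x => ((hvd x).hasDerivAt.mul (hR x))
  have hdw : deriv (fun y => v y * R y) = fun x => deriv v x * R x + v x * R1 x :=
    funext fun x => (hw x).deriv
  have hw1 : ∀ x, HasDerivAt (fun x => deriv v x * R x + v x * R1 x)
      (deriv (deriv v) x * R x + deriv v x * R1 x + (deriv v x * R1 x + v x * R2 x)) x :=
    fun x => (((hv1d x).hasDerivAt.mul (hR x)).add ((hvd x).hasDerivAt.mul (hR1 x)))
  have hddw : ∀ x, deriv (deriv (fun y => v y * R y)) x
      = deriv (deriv v) x * R x + deriv v x * R1 x + (deriv v x * R1 x + v x * R2 x) := by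
    intro x
    rw [hdw]
    exact (hw1 x).deriv
  -- the boundary-term function F and its derivative F1
  set F : ℝ → ℝ := fun x =>
    -((v x * R x) * (deriv v x * R x + v x * R1 x)) + 3 / 2 * (v x * (v x * P x)) with hFdef
  set F1 : ℝ → ℝ := fun x =>
    -((deriv v x * R x + v x * R1 x) ^ 2
        + (v x * R x) * (deriv (deriv v) x * R x + deriv v x * R1 x
            + (deriv v x * R1 x + v x * R2 x)))
      + 3 / 2 * (2 * v x * deriv v x * P x + v x ^ 2 * P1 x) with hF1def
  have hF : ∀ x, HasDerivAt F (F1 x) x := by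
    intro x
    have h1 := ((hw x).mul (hw1 x)).neg
    have h2 := ((hvd x).hasDerivAt.mul (((hvd x).hasDerivAt.mul (hP x)))).const_mul (3 / 2 : ℝ)
    have h3 := h1.add h2
    refine h3.congr_deriv ?_
    simp only [hF1def]
    simp only [Pi.mul_apply]
    ring
  have hFs : HasCompactSupport F := by
    apply hcs_of_vanish2 hvs hvs1
    intro x h1 h2
    simp only [hFdef, h1, h2]
    ring
  have hF1s : HasCompactSupport F1 := by
    apply hcs_of_vanish2 hvs hvs1
    intro x h1 h2
    simp only [hF1def, h1, h2]
    ring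
  have hF1c : Continuous F1 := by
    simp only [hF1def]
    fun_prop
  have hIF1 : Integrable F1 := hF1c.integrable_of_hasCompactSupport hF1s
  have hIL : Integrable (fun x => (deriv v x) ^ 2 * (Q x) ^ 3) := by
    apply Continuous.integrable_of_hasCompactSupport (by fun_prop)
    apply hcs_of_vanish2 hvs hvs1
    intro x h1 h2
    simp [h2]
  -- integral of F1 is zero
  have hbot : Tendsto F atBot (𝓝 0) :=
    hFs.is_zero_at_infty.mono_left (cocompact_eq_atBot_atTop (α := ℝ) ▸ le_sup_left)
  have htop : Tendsto F atTop (𝓝 0) :=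
    hFs.is_zero_at_infty.mono_left (cocompact_eq_atBot_atTop (α := ℝ) ▸ le_sup_right)
  have hZero : ∫ x : ℝ, F1 x = 0 := by
    have := MeasureTheory.integral_of_hasDerivAt_of_tendsto hF hIF1 hbot htop
    simpa using this
  -- pointwise identity
  have key' : (fun x => (v x * R x) *
          (-(deriv (deriv (fun y => v y * R y)) x) + c * (v x * R x)
            - 2 * Q x * (v x * R x) + (5 * c / 4) * (v x * R x)))
      = fun x => (deriv v x) ^ 2 * (Q x) ^ 3 + F1 x := by
    funext x
    rw [hddw x]
    simp only [hF1def]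
    linear_combination hkey x (v x) (deriv v x)
  rw [key', MeasureTheory.integral_add hIL hIF1, hZero, add_zero]

theorem quadratic_form_substitution_identity
    (c : ℝ) (hc : 0 < c) (Q : ℝ → ℝ)
    (hQ : ∀ x, Q x = (3 * c / 2) * (Real.cosh (Real.sqrt c * x / 2))⁻¹ ^ 2) :
    ∀ v : ℝ → ℝ, ContDiff ℝ (⊤ : ℕ∞) v → HasCompactSupport v →
      (1 / 2) * ∫ x : ℝ, (deriv v x) ^ 2 * (Q x) ^ 3
        = (1 / 2) * ∫ x : ℝ, (v x * (Q x) ^ ((3 : ℝ) / 2)) *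
            (-(deriv (deriv (fun y => v y * (Q y) ^ ((3 : ℝ) / 2))) x)
              + c * (v x * (Q x) ^ ((3 : ℝ) / 2))
              - 2 * Q x * (v x * (Q x) ^ ((3 : ℝ) / 2))
              + (5 * c / 4) * (v x * (Q x) ^ ((3 : ℝ) / 2))) := by
  intro v hv hvs
  set a := Real.sqrt c with hadef
  have ha2 : a ^ 2 = c := Real.sq_sqrt hc.le
  have hb : (0 : ℝ) < 3 * c / 2 := by linarith
  set K := (3 * c / 2) ^ ((3 : ℝ) / 2) with hKdef
  have hK2 : K ^ 2 = (3 * c / 2) ^ 3 := by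
    rw [hKdef, ← Real.rpow_natCast ((3 * c / 2) ^ ((3 : ℝ) / 2)) 2, ← Real.rpow_mul hb.le,
      ← Real.rpow_natCast (3 * c / 2) 3]
    norm_num
  have hQR : ∀ x : ℝ, Q x ^ ((3 : ℝ) / 2) = K * (Real.cosh (a * x / 2))⁻¹ ^ 3 := by
    intro x
    have hch : (0 : ℝ) < Real.cosh (a * x / 2) := Real.cosh_pos _
    rw [hQ x, Real.mul_rpow hb.le (by positivity), hKdef]
    congr 1
    rw [← Real.rpow_natCast (Real.cosh (a * x / 2))⁻¹ 2, ← Real.rpow_mul (by positivity),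
      ← Real.rpow_natCast (Real.cosh (a * x / 2))⁻¹ 3]
    norm_num
  simp only [hQR]
  simp only [hQ]
  exact main_aux c
    (fun x => 3 * c / 2 * (Real.cosh (a * x / 2))⁻¹ ^ 2)
    (fun x => K * (Real.cosh (a * x / 2))⁻¹ ^ 3)
    (fun x => K * (-(3 * (a / 2)) * (Real.sinh (a * x / 2) * (Real.cosh (a * x / 2))⁻¹ ^ 4)))
    (fun x => (-(3 * (a / 2)) * K) * ((a / 2) * ((Real.cosh (a * x / 2))⁻¹ ^ 3
          - 4 * Real.sinh (a * x / 2) ^ 2 * (Real.cosh (a * x / 2))⁻¹ ^ 5)))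
    (fun x => (-(a * (3 * c / 2) ^ 3)) * (Real.sinh (a * x / 2) * (Real.cosh (a * x / 2))⁻¹ ^ 7))
    (fun x => (-(a * (3 * c / 2) ^ 3)) * ((a / 2) * ((Real.cosh (a * x / 2))⁻¹ ^ 6
          - 7 * Real.sinh (a * x / 2) ^ 2 * (Real.cosh (a * x / 2))⁻¹ ^ 8)))
    v hv hvs
    (by fun_prop (disch := exact fun x => (Real.cosh_pos _).ne'))
    (by fun_prop (disch := exact fun x => (Real.cosh_pos _).ne'))
    (by fun_prop (disch := exact fun x => (Real.cosh_pos _).ne'))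
    (fun x => hasDerivAt_L1 a K x)
    (by
      intro x
      have heq : (fun x => K * (-(3 * (a / 2)) * (Real.sinh (a * x / 2)
          * (Real.cosh (a * x / 2))⁻¹ ^ 4)))
          = fun x => (-(3 * (a / 2)) * K) * (Real.sinh (a * x / 2)
              * (Real.cosh (a * x / 2))⁻¹ ^ 4) := by
        funext y; ring
      rw [heq]
      exact hasDerivAt_L2 a (-(3 * (a / 2)) * K) x)
    (fun x => hasDerivAt_L3 a (-(a * (3 * c / 2) ^ 3)) x)
    (by
      intro x vx v1x
      have h0 : Real.cosh (a * x / 2) ≠ 0 := (Real.cosh_pos _).ne'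
      have hST : Real.sinh (a * x / 2) ^ 2 * ((Real.cosh (a * x / 2))⁻¹) ^ 2
          = 1 - ((Real.cosh (a * x / 2))⁻¹) ^ 2 := by
        rw [Real.sinh_sq]
        field_simp
      set S := Real.sinh (a * x / 2)
      set T := (Real.cosh (a * x / 2))⁻¹
      linear_combination
        (v1x ^ 2 * T ^ 6 - 3 * a * vx * v1x * S * T ^ 7 + (9 * c / 4) * vx ^ 2 * T ^ 6
          - 3 * c * vx ^ 2 * T ^ 8 + (9 * c / 4) * vx ^ 2 * S ^ 2 * T ^ 8) * hK2
        + ((9 / 4) * K ^ 2 * vx ^ 2 * S ^ 2 * T ^ 8 + (3 * (3 * c / 2) ^ 3 / 4) * vx ^ 2 * T ^ 6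
          - (21 * (3 * c / 2) ^ 3 / 4) * vx ^ 2 * S ^ 2 * T ^ 8) * ha2
        + (-3 * c * (3 * c / 2) ^ 3 * vx ^ 2 * T ^ 6) * hST)
end
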